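/- Let R be a finite commutative ring with J(R) ≠ 0 and R/J(R) ≅ ℤ/2 ⊕ ℤ/2. Then the Jacobson graph of R contains a cycle of length 3 but contains no induced cycle of length greater than 3. -/

import Mathlib

open scoped Classical

/-- The Jacobson graph of a commutative ring `R`. -/
def jacobsonGraph (R : Type*) [CommRing R] :
    SimpleGraph {x : R // x ∉ Ideal.jacobson (⊥ : Ideal R)} where
  Adj x y := x ≠ y ∧ ¬ IsUnit (1 - (x : R) * y)
  symm := by
    constructor
    rintro x y ⟨h1, h2⟩
    exact ⟨h1.symm, by rwa [mul_comm] at h2⟩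
  loopless := ⟨fun x ⟨h, _⟩ => h rfl⟩

/-- An induced (chordless) cycle in a simple graph. -/
def IsInducedCycle {V : Type*} {G : SimpleGraph V} {u : V} (p : G.Walk u u) : Prop :=
  p.IsCycle ∧ ∀ x ∈ p.support, ∀ y ∈ p.support, G.Adj x y → s(x, y) ∈ p.edges

/-- An induced (chordless) path in a simple graph. -/
def IsInducedPath {V : Type*} {G : SimpleGraph V} {u v : V} (p : G.Walk u v) : Prop :=
  p.IsPath ∧ ∀ x ∈ p.support, ∀ y ∈ p.support, G.Adj x y → s(x, y) ∈ p.edges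

/-! Let `φ : R → 𝔽₂ × 𝔽₂` be the quotient map. As `ker φ = J(R)`, `x` is a unit iff `φ x = 1`,
so distinct vertices `x, y` are adjacent iff `φ x * φ y ≠ 0`. Hence a unit is adjacent to every
other vertex, and `1`, `1 + j`, `a` with `0 ≠ j ∈ J(R)` and `φ a = (1, 0)` form a triangle.
In an induced cycle `u v₁ v₂ v₃ ⋯` of length at least four, `φ u * φ v₂ = 0` with both factors
nonzero forces `{φ u, φ v₂} = {(1, 0), (0, 1)}`, so `φ v₁ = 1`: then `v₁` is a unit and `v₁ v₃`
is a chord. -/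

open SimpleGraph Walk

lemma SimpleGraph.Walk.IsCycle.distance_two_ne_and_notMem_edges {V : Type*} {G : SimpleGraph V}
    {u v₁ v₂ v₃ v₄ : V} {h₀₁ : G.Adj u v₁} {h₁₂ : G.Adj v₁ v₂} {h₂₃ : G.Adj v₂ v₃}
    {h₃₄ : G.Adj v₃ v₄} {q : G.Walk v₄ u}
    (hc : (cons h₀₁ (cons h₁₂ (cons h₂₃ (cons h₃₄ q)))).IsCycle) :
    u ≠ v₂ ∧ v₁ ≠ v₃ ∧ s(u, v₂) ∉ (cons h₀₁ (cons h₁₂ (cons h₂₃ (cons h₃₄ q)))).edges ∧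
      s(v₁, v₃) ∉ (cons h₀₁ (cons h₁₂ (cons h₂₃ (cons h₃₄ q)))).edges := by
  have hnd := hc.support_nodup
  simp only [support_cons, List.tail_cons, List.nodup_cons, List.mem_cons, not_or] at hnd
  obtain ⟨⟨h₁₂', h₁₃, h₁q⟩, ⟨h₂₃', h₂q⟩, h₃q, -⟩ := hnd
  have hu : u ∈ q.support := q.end_mem_support
  have hu₁ : u ≠ v₁ := fun h => h₁q (h ▸ hu)
  have hu₂ : u ≠ v₂ := fun h => h₂q (h ▸ hu)
  have hu₃ : u ≠ v₃ := fun h => h₃q (h ▸ hu)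
  have h₁₄ : v₁ ≠ v₄ := fun h => h₁q (h ▸ q.start_mem_support)
  have hq₀₂ : s(u, v₂) ∉ q.edges := fun h => h₂q (q.snd_mem_support_of_mem_edges h)
  have hq₁₃ : s(v₁, v₃) ∉ q.edges := fun h => h₁q (q.fst_mem_support_of_mem_edges h)
  refine ⟨hu₂, h₁₃, ?_, ?_⟩ <;> simp only [edges_cons, List.mem_cons, Sym2.eq_iff] <;> grind

theorem IsInducedCycle.length_le_three {V : Type*} {G : SimpleGraph V} {u : V}
    {p : G.Walk u u} (hp : IsInducedCycle p)
    (hdom : ∀ a b c d, G.Adj a b → G.Adj b c → a ≠ c → ¬ G.Adj a c → d ≠ b → G.Adj b d) :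
    p.length ≤ 3 := by
  obtain ⟨hcyc, hchordless⟩ := hp
  match p, hcyc, hchordless with
  | nil, _, _ | cons _ nil, _, _ | cons _ (cons _ nil), _, _ | cons _ (cons _ (cons _ nil)), _, _ =>
    simp
  | cons (v := v₁) h₀₁ (cons (v := v₂) h₁₂ (cons (v := v₃) h₂₃ (cons h₃₄ q))), hcyc, hchordless =>
    obtain ⟨hu₂, h₁₃, hchord₀₂, hchord₁₃⟩ := hcyc.distance_two_ne_and_notMem_edges
    have hnot₀₂ : ¬ G.Adj u v₂ := fun h => hchord₀₂ (hchordless u (by simp) v₂ (by simp) h)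
    have had₁₃ := hdom u v₁ v₂ v₃ h₀₁ h₁₂ hu₂ hnot₀₂ h₁₃.symm
    exact absurd (hchordless v₁ (by simp) v₃ (by simp) had₁₃) hchord₁₃

lemma ZMod.isUnit_two_prod_iff {z : ZMod 2 × ZMod 2} : IsUnit z ↔ z = 1 := by
  revert z; decide

lemma ZMod.two_prod_eq_one_of_mul_ne_zero {x y z : ZMod 2 × ZMod 2} (hx : x ≠ 0) (hz : z ≠ 0)
    (hxz : x * z = 0) (hxy : x * y ≠ 0) (hyz : y * z ≠ 0) : y = 1 := by
  revert x y z; decide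

section KleinQuotient

variable {R : Type*} [CommRing R] {φ : R →+* ZMod 2 × ZMod 2}

lemma isUnit_iff_map_eq_one_of_ker_le_jacobson (hφ : RingHom.ker φ ≤ Ideal.jacobson ⊥) {x : R} :
    IsUnit x ↔ φ x = 1 := by
  refine ⟨fun hx => ZMod.isUnit_two_prod_iff.mp (hx.map φ), fun hx => ?_⟩
  exact Ideal.isUnit_of_sub_one_mem_jacobson_bot x (hφ (by simp [hx]))

lemma map_ne_zero_of_ker_le_jacobson (hφ : RingHom.ker φ ≤ Ideal.jacobson ⊥)
    (x : {x : R // x ∉ Ideal.jacobson (⊥ : Ideal R)}) : φ x ≠ 0 :=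
  fun h => x.2 (hφ h)

lemma jacobsonGraph_adj_iff_of_ker_le_jacobson (hφ : RingHom.ker φ ≤ Ideal.jacobson ⊥)
    {x y : {x : R // x ∉ Ideal.jacobson (⊥ : Ideal R)}} :
    (jacobsonGraph R).Adj x y ↔ x ≠ y ∧ φ x * φ y ≠ 0 := by
  simp only [jacobsonGraph, isUnit_iff_map_eq_one_of_ker_le_jacobson hφ, map_sub, map_one,
    map_mul, sub_eq_self]

lemma jacobsonGraph_adj_of_isUnit (hφ : RingHom.ker φ ≤ Ideal.jacobson ⊥)
    {x y : {x : R // x ∉ Ideal.jacobson (⊥ : Ideal R)}} (hx : IsUnit (x : R)) (hxy : x ≠ y) :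
    (jacobsonGraph R).Adj x y := by
  rw [jacobsonGraph_adj_iff_of_ker_le_jacobson hφ,
    (isUnit_iff_map_eq_one_of_ker_le_jacobson hφ).mp hx, one_mul]
  exact ⟨hxy, map_ne_zero_of_ker_le_jacobson hφ y⟩

lemma isUnit_of_jacobsonGraph_adj_of_not_adj (hφ : RingHom.ker φ ≤ Ideal.jacobson ⊥)
    {a b c : {x : R // x ∉ Ideal.jacobson (⊥ : Ideal R)}} (hab : (jacobsonGraph R).Adj a b)
    (hbc : (jacobsonGraph R).Adj b c) (hac : a ≠ c) (hnac : ¬ (jacobsonGraph R).Adj a c) :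
    IsUnit (b : R) := by
  simp only [jacobsonGraph_adj_iff_of_ker_le_jacobson hφ, not_and, not_not] at hab hbc hnac
  rw [isUnit_iff_map_eq_one_of_ker_le_jacobson hφ]
  exact ZMod.two_prod_eq_one_of_mul_ne_zero (map_ne_zero_of_ker_le_jacobson hφ a)
    (map_ne_zero_of_ker_le_jacobson hφ c) (hnac hac) hab.2 hbc.2

lemma jacobsonGraph_exists_cycle_length_three (hφ : RingHom.ker φ ≤ Ideal.jacobson ⊥)
    {u v w : {x : R // x ∉ Ideal.jacobson (⊥ : Ideal R)}} (hu : IsUnit (u : R))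
    (hv : IsUnit (v : R)) (huv : u ≠ v) (hw : ¬ IsUnit (w : R)) :
    ∃ (x : {x : R // x ∉ Ideal.jacobson (⊥ : Ideal R)}) (p : (jacobsonGraph R).Walk x x),
      p.IsCycle ∧ p.length = 3 := by
  have huw : u ≠ w := by rintro rfl; exact hw hu
  have hvw : v ≠ w := by rintro rfl; exact hw hv
  refine is3Clique_iff_exists_cycle_length_three.mp
    ⟨{u, v, w}, is3Clique_triple_iff.mpr ⟨?_, ?_, ?_⟩⟩
  exacts [jacobsonGraph_adj_of_isUnit hφ hu huv, jacobsonGraph_adj_of_isUnit hφ hu huw,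
    jacobsonGraph_adj_of_isUnit hφ hv hvw]

end KleinQuotient

theorem jacobsonGraph_triangle_of_quotient_klein_general
    (R : Type*) [CommRing R]
    (hJ : Ideal.jacobson (⊥ : Ideal R) ≠ ⊥)
    (hq : Nonempty ((R ⧸ Ideal.jacobson (⊥ : Ideal R)) ≃+* (ZMod 2 × ZMod 2))) :
    (∃ (u : {x : R // x ∉ Ideal.jacobson (⊥ : Ideal R)})
      (p : (jacobsonGraph R).Walk u u), p.IsCycle ∧ p.length = 3) ∧
    ∀ (u : {x : R // x ∉ Ideal.jacobson (⊥ : Ideal R)})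
      (p : (jacobsonGraph R).Walk u u), IsInducedCycle p → p.length ≤ 3 := by
  obtain ⟨e⟩ := hq
  let φ : R →+* ZMod 2 × ZMod 2 := e.toRingHom.comp (Ideal.Quotient.mk _)
  have hφ : RingHom.ker φ ≤ Ideal.jacobson ⊥ := fun x hx =>
    Ideal.Quotient.eq_zero_iff_mem.mp (by simpa [φ] using hx)
  refine ⟨?_, fun u p hp => hp.length_le_three fun a b c d hab hbc hac hnac hdb =>
    jacobsonGraph_adj_of_isUnit hφ (isUnit_of_jacobsonGraph_adj_of_not_adj hφ hab hbc hac hnac)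
      hdb.symm⟩
  obtain ⟨j, hj, hj0⟩ := Submodule.exists_mem_ne_zero_of_ne_bot hJ
  obtain ⟨a, haφ⟩ := (e.surjective.comp Ideal.Quotient.mk_surjective) (1, 0)
  change φ a = (1, 0) at haφ
  have : Nontrivial R := nontrivial_of_ne j 0 hj0
  have hunit_notMem {x : R} (hx : IsUnit x) : x ∉ Ideal.jacobson ⊥ := fun hxJ =>
    Ideal.jacobson_eq_top_iff.not.mpr bot_ne_top (Ideal.eq_top_of_isUnit_mem _ hxJ hx)
  have h1j : IsUnit (1 + j) :=
    Ideal.isUnit_of_sub_one_mem_jacobson_bot _ (by simpa using hj)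
  have haJ : a ∉ Ideal.jacobson ⊥ := fun haJ => by
    simp [φ, Ideal.Quotient.eq_zero_iff_mem.mpr haJ, Prod.ext_iff] at haφ
  have ha_nonunit : ¬ IsUnit a := by
    rw [isUnit_iff_map_eq_one_of_ker_le_jacobson hφ, haφ]
    decide
  exact jacobsonGraph_exists_cycle_length_three hφ (u := ⟨1, hunit_notMem isUnit_one⟩)
    (v := ⟨1 + j, hunit_notMem h1j⟩) (w := ⟨a, haJ⟩) isUnit_one h1j (by simpa using hj0) ha_nonunit

/-- If R is a finite commutative ring with J(R) ≠ 0 and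
R/J(R) ≅ ℤ/2 ⊕ ℤ/2, then the Jacobson graph of R contains a cycle of length 3, but no
induced cycle of length greater than 3. -/
theorem jacobsonGraph_triangle_of_quotient_klein
    (R : Type*) [CommRing R] [Finite R]
    (hJ : Ideal.jacobson (⊥ : Ideal R) ≠ ⊥)
    (hq : Nonempty ((R ⧸ Ideal.jacobson (⊥ : Ideal R)) ≃+* (ZMod 2 × ZMod 2))) :
    (∃ (u : {x : R // x ∉ Ideal.jacobson (⊥ : Ideal R)})
      (p : (jacobsonGraph R).Walk u u), p.IsCycle ∧ p.length = 3) ∧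
    ∀ (u : {x : R // x ∉ Ideal.jacobson (⊥ : Ideal R)})
      (p : (jacobsonGraph R).Walk u u), IsInducedCycle p → p.length ≤ 3 :=
  jacobsonGraph_triangle_of_quotient_klein_general R hJ hq
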